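/- Let L be an n×n Laplacian matrix, δ > 0, and y⁰ ∈ ℝ^{n+1}. Then exp(−t(L₀ + H_{δ,δ1}))·y⁰ converges as t → ∞ to the constant vector c·1′, where c = (1/(n+1))·( Σ_{j=1}^n s_j^δ · y⁰_j + y⁰_{n+1} ) and s_j^δ denotes the j-th column sum of the matrix (I + δ⁻¹L)⁻¹. -/

import Mathlib

/-!
`M = L₀ + H_{δ,δ1}` has nonpositive off-diagonal entries and zero row sums, so `P(t) = exp(-tM)`
is a stochastic matrix, and `w = (s^δ, 1) / (n+1)` satisfies `wᵀM = 0` because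
`(s^δ)ᵀ(I + δ⁻¹L) = 1ᵀ`; hence `w ⬝ y(t)` is conserved. The hub is joined to every node with
weight `δ`, so every row of `P(1)` puts mass at least some `ε > 0` on the hub; averaging against a
common coordinate shrinks the spread `max y - min y` by the factor `1 - ε` per unit of time.
So `y(t)` collapses onto a constant vector, which must be `(w ⬝ y⁰) 1′`.
-/

open Matrix Filter Topology

/-- The index of a square real matrix: the smallest `k` with
`rank (A^(k+1)) = rank (A^k)`. -/
noncomputable def matIndex {m : Type*} [Fintype m] [DecidableEq m]
    (A : Matrix m m ℝ) : ℕ :=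
  sInf {k : ℕ | (A ^ (k + 1)).rank = (A ^ k).rank}

/-- `Q` is the eigenprojection of `A` corresponding to the eigenvalue `0`:
an idempotent matrix whose range is the null space of `A ^ ind A` and whose
null space is the range of `A ^ ind A`. -/
def IsEigenprojection {m : Type*} [Fintype m] [DecidableEq m]
    (A Q : Matrix m m ℝ) : Prop :=
  Q * Q = Q ∧
  LinearMap.range Q.mulVecLin = LinearMap.ker (A ^ matIndex A).mulVecLin ∧
  LinearMap.ker Q.mulVecLin = LinearMap.range (A ^ matIndex A).mulVecLin

/-- A Laplacian matrix: nonpositive off-diagonal entries and zero row sums. -/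
def IsLaplacian {m : Type*} [Fintype m] (L : Matrix m m ℝ) : Prop :=
  (∀ i j, i ≠ j → L i j ≤ 0) ∧ ∀ i, ∑ j, L i j = 0

/-- The block matrix `L₀ = [[L, 0], [0ᵀ, 0]]`. -/
def hubL0 {n : ℕ} (L : Matrix (Fin n) (Fin n) ℝ) :
    Matrix (Fin n ⊕ Unit) (Fin n ⊕ Unit) ℝ :=
  Matrix.fromBlocks L 0 0 0

/-- The block matrix `H_I = [[I, -1], [0ᵀ, 0]]`. -/
def hubHI (n : ℕ) : Matrix (Fin n ⊕ Unit) (Fin n ⊕ Unit) ℝ :=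
  Matrix.fromBlocks 1 (Matrix.of fun _ _ => (-1 : ℝ)) 0 0

/-- The block matrix `H_v = [[0, 0], [-vᵀ, s]]` where `s = Σᵢ vᵢ`. -/
def hubHv {n : ℕ} (v : Fin n → ℝ) : Matrix (Fin n ⊕ Unit) (Fin n ⊕ Unit) ℝ :=
  Matrix.fromBlocks 0 0 (Matrix.of fun _ j => -v j) (Matrix.of fun _ _ => ∑ i, v i)

/-- `H_{δ,v} = δ·H_I + H_v`. -/
def hubH {n : ℕ} (δ : ℝ) (v : Fin n → ℝ) :
    Matrix (Fin n ⊕ Unit) (Fin n ⊕ Unit) ℝ :=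
  δ • hubHI n + hubHv v

open NormedSpace Finset Set

namespace Matrix

variable {ι : Type*}

theorem smul_one_sub_apply_nonneg [DecidableEq ι] {M : Matrix ι ι ℝ}
    (hoff : ∀ i j, i ≠ j → M i j ≤ 0) {α : ℝ} (hα : ∀ i, M i i ≤ α) (i j : ι) :
    0 ≤ (α • 1 - M) i j := by
  by_cases h : i = j
  · subst h
    simpa using hα i
  · simpa [one_apply_ne h] using hoff i j h

variable [Fintype ι]

section Exp

variable [DecidableEq ι]

/- The operator-norm instances agree with the plain matrix ones only up to unfolding, hence
`convert … <;> rfl`. -/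
theorem semiconjBy_exp {X A B : Matrix ι ι ℝ} (h : SemiconjBy X A B) :
    SemiconjBy X (exp A) (exp B) := by
  open scoped Norms.Operator in
  convert h.exp_right using 2 <;> rfl

theorem exp_mulVec_of_mulVec_eq_zero {A : Matrix ι ι ℝ} {v : ι → ℝ} (h : A *ᵥ v = 0) :
    exp A *ᵥ v = v := by
  have hX : SemiconjBy (replicateCol ι v) 0 A := by
    rw [SemiconjBy, mul_zero, ← replicateCol_mulVec, h, replicateCol_zero]
  have := semiconjBy_exp hX
  rw [SemiconjBy, exp_zero, mul_one] at this
  ext i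
  simpa [← replicateCol_mulVec] using (congrFun (congrFun this i) i).symm

theorem vecMul_exp_of_vecMul_eq_zero {A : Matrix ι ι ℝ} {w : ι → ℝ} (h : w ᵥ* A = 0) :
    w ᵥ* exp A = w := by
  have hX : SemiconjBy (replicateRow ι w) A 0 := by
    rw [SemiconjBy, zero_mul, ← replicateRow_vecMul, h, replicateRow_zero]
  have := semiconjBy_exp hX
  rw [SemiconjBy, exp_zero, one_mul] at this
  ext i
  simpa [← replicateRow_vecMul] using congrFun (congrFun this i) i

theorem hasSum_exp_apply (A : Matrix ι ι ℝ) (i j : ι) :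
    HasSum (fun k : ℕ => (k.factorial : ℝ)⁻¹ * (A ^ k) i j) (exp A i j) :=
  open scoped Norms.Operator in
  Pi.hasSum.mp (Pi.hasSum.mp (exp_series_hasSum_exp' (𝕂 := ℝ) A) i) j

theorem exp_smul_one_add (c : ℝ) (B : Matrix ι ι ℝ) :
    exp (c • (1 : Matrix ι ι ℝ) + B) = Real.exp c • exp B := by
  rw [exp_add_of_commute _ _ ((Commute.one_left B).smul_left c), ← Algebra.algebraMap_eq_smul_one]
  open scoped Norms.Operator in
  erw [← algebraMap_exp_comm]
  rw [Real.exp_eq_exp_ℝ, Algebra.algebraMap_eq_smul_one, smul_one_mul]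

variable {A : Matrix ι ι ℝ}

theorem exp_apply_nonneg (hA : ∀ i j, 0 ≤ A i j) (i j : ι) : 0 ≤ exp A i j :=
  (hasSum_exp_apply A i j).nonneg fun k => mul_nonneg (by positivity) (pow_apply_nonneg hA k i j)

theorem apply_le_exp_apply (hA : ∀ i j, 0 ≤ A i j) (i j : ι) : A i j ≤ exp A i j := by
  simpa using le_hasSum (hasSum_exp_apply A i j) 1
    fun k _ => mul_nonneg (by positivity) (pow_apply_nonneg hA k i j)

end Exp

section Stochastic

variable {P : Matrix ι ι ℝ}

theorem apply_mul_le_mulVec_apply (hP : ∀ i j, 0 ≤ P i j) {z : ι → ℝ} (hz : 0 ≤ z) (i r : ι) :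
    P i r * z r ≤ (P *ᵥ z) i :=
  single_le_sum (f := fun j => P i j * z j) (fun j _ => mul_nonneg (hP i j) (hz j)) (mem_univ r)

/- Doeblin's contraction: mixing every coordinate with the weight `ε` of coordinate `r`
shrinks any enclosing interval by the factor `1 - ε`. -/
theorem mulVec_apply_mem_Icc (hP : ∀ i j, 0 ≤ P i j) (hP1 : P *ᵥ 1 = 1) {r : ι} {ε : ℝ}
    (hε : ∀ i, ε ≤ P i r) {x : ι → ℝ} {a b : ℝ} (hx : ∀ j, x j ∈ Icc a b) (i : ι) :
    (P *ᵥ x) i ∈ Icc (a + ε * (x r - a)) (b - ε * (b - x r)) := by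
  obtain ⟨har, hrb⟩ := hx r
  have hlow : P i r * (x r - a) ≤ (P *ᵥ x) i - a := by
    simpa [mulVec_sub, mulVec_smul, hP1] using
      apply_mul_le_mulVec_apply hP (z := x - a • 1) (fun j => by simpa using (hx j).1) i r
  have hup : P i r * (b - x r) ≤ b - (P *ᵥ x) i := by
    simpa [mulVec_sub, mulVec_smul, hP1] using
      apply_mul_le_mulVec_apply hP (z := b • 1 - x) (fun j => by simpa using (hx j).2) i r
  constructor
  · nlinarith [mul_le_mul_of_nonneg_right (hε i) (sub_nonneg.2 har)]
  · nlinarith [mul_le_mul_of_nonneg_right (hε i) (sub_nonneg.2 hrb)]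

theorem exists_Icc_pow_mulVec [DecidableEq ι] (hP : ∀ i j, 0 ≤ P i j) (hP1 : P *ᵥ 1 = 1)
    {r : ι} {ε : ℝ} (hε : ∀ i, ε ≤ P i r) {x : ι → ℝ} {a b : ℝ} (hx : ∀ j, x j ∈ Icc a b) (k : ℕ) :
    ∃ a' b', b' - a' = (1 - ε) ^ k * (b - a) ∧ ∀ i, (P ^ k *ᵥ x) i ∈ Icc a' b' := by
  induction k with
  | zero => exact ⟨a, b, by simp, by simpa using hx⟩
  | succ k ih =>
    obtain ⟨a', b', hwidth, hk⟩ := ih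
    refine ⟨_, _, ?_, fun i => by
      simpa [pow_succ', ← mulVec_mulVec] using mulVec_apply_mem_Icc hP hP1 hε hk i⟩
    rw [pow_succ]
    linear_combination (1 - ε) * hwidth

end Stochastic

theorem abs_sub_dotProduct_le {w x : ι → ℝ} (hw : ∑ j, w j = 1) {a b : ℝ}
    (hx : ∀ j, x j ∈ Icc a b) (i : ι) : |x i - w ⬝ᵥ x| ≤ (∑ j, |w j|) * (b - a) := by
  have hsplit : x i - w ⬝ᵥ x = ∑ j, w j * (x i - x j) := by
    simp only [dotProduct, mul_sub, sum_sub_distrib, ← sum_mul, hw, one_mul]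
  rw [hsplit, sum_mul]
  refine (abs_sum_le_sum_abs _ _).trans (sum_le_sum fun j _ => ?_)
  rw [abs_mul]
  refine mul_le_mul_of_nonneg_left (abs_le.2 ⟨?_, ?_⟩) (abs_nonneg _) <;>
    linarith [hx i, hx j, (hx i).1, (hx i).2, (hx j).1, (hx j).2]

theorem diag_le_sum_abs_diag (M : Matrix ι ι ℝ) (i : ι) : M i i ≤ ∑ k, |M k k| :=
  (le_abs_self _).trans (single_le_sum (fun k _ => abs_nonneg (M k k)) (mem_univ i))

section Generator

variable [DecidableEq ι] {M : Matrix ι ι ℝ}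

theorem exp_neg_smul_eq (M : Matrix ι ι ℝ) (α t : ℝ) :
    exp (-(t • M)) = Real.exp (-(t * α)) • exp (t • (α • 1 - M)) := by
  rw [← exp_smul_one_add]
  congr 1
  module

theorem exp_neg_smul_eq_mul_pow (M : Matrix ι ι ℝ) (t : ℝ) (k : ℕ) :
    exp (-(t • M)) = exp (-((t - k) • M)) * exp (-M) ^ k := by
  rw [← exp_nsmul, ← exp_add_of_commute]
  · congr 1
    module
  · exact ((Commute.refl M).smul_left (t - k : ℝ)).neg_left.neg_right.smul_right k

theorem exp_neg_smul_apply_nonneg (hoff : ∀ i j, i ≠ j → M i j ≤ 0) {t : ℝ} (ht : 0 ≤ t)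
    (i j : ι) : 0 ≤ exp (-(t • M)) i j := by
  have hB := smul_one_sub_apply_nonneg hoff (diag_le_sum_abs_diag M)
  rw [exp_neg_smul_eq M (∑ k, |M k k|) t, smul_apply, smul_eq_mul]
  exact mul_nonneg (Real.exp_pos _).le
    (exp_apply_nonneg (fun i j => mul_nonneg ht (hB i j)) i j)

/- With `α = δ + ∑ |Mₖₖ|`, `α • 1 - M` is entrywise nonnegative with column `r` at least `δ`, and
`exp (-M) = exp (-α) • exp (α • 1 - M)`; the first-order term of the series bounds column `r`. -/
theorem le_exp_neg_apply (hoff : ∀ i j, i ≠ j → M i j ≤ 0) {r : ι} {δ : ℝ} (hδ : 0 ≤ δ)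
    (hr : ∀ i, i ≠ r → M i r ≤ -δ) (i : ι) :
    Real.exp (-(δ + ∑ k, |M k k|)) * δ ≤ exp (-M) i r := by
  set α := δ + ∑ k, |M k k|
  have hα : ∀ i, M i i + δ ≤ α := fun i => by linarith [diag_le_sum_abs_diag M i]
  have hB := smul_one_sub_apply_nonneg hoff (α := α) fun i => by linarith [hα i]
  have hBr : δ ≤ (α • 1 - M) i r := by
    by_cases h : i = r
    · subst h
      simp only [sub_apply, smul_apply, one_apply_eq, smul_eq_mul, mul_one]
      linarith [hα i]
    · simp only [sub_apply, smul_apply, one_apply_ne h, smul_eq_mul, mul_zero, zero_sub]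
      linarith [hr i h]
  have := exp_neg_smul_eq M α 1
  rw [one_smul, one_mul, one_smul] at this
  rw [this, smul_apply, smul_eq_mul]
  exact mul_le_mul_of_nonneg_left (hBr.trans (apply_le_exp_apply hB i r)) (Real.exp_pos _).le

theorem exists_abs_exp_neg_smul_mulVec_sub_le (hoff : ∀ i j, i ≠ j → M i j ≤ 0)
    (hM1 : M *ᵥ 1 = 0) {w : ι → ℝ} (hwM : w ᵥ* M = 0) (hw1 : ∑ i, w i = 1) {r : ι} {δ : ℝ}
    (hδ : 0 < δ) (hr : ∀ i, i ≠ r → M i r ≤ -δ) (y₀ : ι → ℝ) :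
    ∃ ρ C : ℝ, 0 ≤ ρ ∧ ρ < 1 ∧ ∀ t : ℝ, 0 ≤ t → ∀ i,
      |(exp (-(t • M)) *ᵥ y₀) i - w ⬝ᵥ y₀| ≤ C * ρ ^ ⌊t⌋₊ := by
  have hP1 (t : ℝ) : exp (-(t • M)) *ᵥ 1 = 1 :=
    exp_mulVec_of_mulVec_eq_zero (by rw [neg_mulVec, smul_mulVec, hM1, smul_zero, neg_zero])
  have hwP (t : ℝ) : w ᵥ* exp (-(t • M)) = w :=
    vecMul_exp_of_vecMul_eq_zero (by rw [vecMul_neg, vecMul_smul, hwM, smul_zero, neg_zero])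
  have hP1M : exp (-M) *ᵥ 1 = 1 := by simpa using hP1 1
  have hPM : ∀ i j, 0 ≤ exp (-M) i j := by simpa using exp_neg_smul_apply_nonneg hoff zero_le_one
  set ε := Real.exp (-(δ + ∑ k, |M k k|)) * δ
  have hε := le_exp_neg_apply hoff hδ.le hr
  have hε0 : 0 < ε := by positivity
  have hε1 : ε ≤ 1 :=
    (hε r).trans (by simpa [hP1M] using apply_mul_le_mulVec_apply hPM zero_le_one r r)
  refine ⟨1 - ε, (∑ j, |w j|) * (2 * ‖y₀‖), by linarith, by linarith, fun t ht i => ?_⟩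
  obtain ⟨a, b, hwidth, hab⟩ := exists_Icc_pow_mulVec hPM hP1M hε
    (fun j => abs_le.1 (norm_le_pi_norm y₀ j)) ⌊t⌋₊
  have hPt := exp_neg_smul_apply_nonneg hoff (sub_nonneg.2 (Nat.floor_le ht))
  have hIcc (j : ι) : (exp (-(t • M)) *ᵥ y₀) j ∈ Icc a b := by
    rw [exp_neg_smul_eq_mul_pow M t ⌊t⌋₊, ← mulVec_mulVec]
    simpa only [zero_mul, add_zero, sub_zero] using
      mulVec_apply_mem_Icc (ε := 0) hPt (hP1 _) (fun i => hPt i r) hab j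
  have := abs_sub_dotProduct_le hw1 hIcc i
  rw [dotProduct_mulVec, hwP, hwidth] at this
  exact this.trans_eq (by ring)

theorem tendsto_exp_neg_smul_mulVec (hoff : ∀ i j, i ≠ j → M i j ≤ 0)
    (hM1 : M *ᵥ 1 = 0) {w : ι → ℝ} (hwM : w ᵥ* M = 0) (hw1 : ∑ i, w i = 1) {r : ι} {δ : ℝ}
    (hδ : 0 < δ) (hr : ∀ i, i ≠ r → M i r ≤ -δ) (y₀ : ι → ℝ) :
    Tendsto (fun t : ℝ => exp (-(t • M)) *ᵥ y₀) atTop (𝓝 fun _ => w ⬝ᵥ y₀) := by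
  obtain ⟨ρ, C, hρ0, hρ1, hbound⟩ :=
    exists_abs_exp_neg_smul_mulVec_sub_le hoff hM1 hwM hw1 hδ hr y₀
  have hlim : Tendsto (fun t : ℝ => C * ρ ^ ⌊t⌋₊) atTop (𝓝 0) := by
    simpa using ((tendsto_pow_atTop_nhds_zero_of_lt_one hρ0 hρ1).comp
      tendsto_nat_floor_atTop).const_mul C
  refine tendsto_pi_nhds.2 fun i => tendsto_sub_nhds_zero_iff.1 ?_
  exact squeeze_zero_norm' ((eventually_ge_atTop 0).mono fun t ht => hbound t ht i) hlim

end Generator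

end Matrix

namespace IsLaplacian

variable {m : Type*} [Fintype m] {L : Matrix m m ℝ}

theorem mulVec_one (hL : IsLaplacian L) : L *ᵥ 1 = 0 := by
  ext i
  simpa [mulVec, dotProduct] using hL.2 i

theorem smul (hL : IsLaplacian L) {c : ℝ} (hc : 0 ≤ c) : IsLaplacian (c • L) :=
  ⟨fun i j h => by simpa using mul_nonpos_of_nonneg_of_nonpos hc (hL.1 i j h),
    fun i => by simp [← mul_sum, hL.2 i]⟩

theorem sum_erase_neg_eq_diag [DecidableEq m] (hL : IsLaplacian L) (i : m) :
    ∑ j ∈ univ.erase i, -L i j = L i i := by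
  have hrow := sum_erase_add univ (L i) (mem_univ i)
  rw [hL.2 i] at hrow
  rw [sum_neg_distrib]
  linarith

variable [DecidableEq m]

theorem det_one_add_ne_zero (hL : IsLaplacian L) : (1 + L).det ≠ 0 := by
  have hdiag (i : m) : 0 ≤ L i i := by
    rw [← hL.sum_erase_neg_eq_diag i]
    exact sum_nonneg fun j hj => neg_nonneg.2 (hL.1 i j (ne_of_mem_erase hj).symm)
  refine det_ne_zero_of_sum_row_lt_diag fun i => ?_
  have hoff : ∑ j ∈ univ.erase i, ‖(1 + L) i j‖ = L i i := by
    rw [← hL.sum_erase_neg_eq_diag i]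
    refine sum_congr rfl fun j hj => ?_
    have hij := (ne_of_mem_erase hj).symm
    rw [Matrix.add_apply, one_apply_ne hij, zero_add, Real.norm_eq_abs,
      abs_of_nonpos (hL.1 i j hij)]
  rw [hoff, Matrix.add_apply, one_apply_eq, Real.norm_eq_abs, abs_of_pos (by linarith [hdiag i])]
  linarith

theorem inv_one_add_mulVec_one (hL : IsLaplacian L) : (1 + L)⁻¹ *ᵥ 1 = 1 := by
  have h1 : (1 + L) *ᵥ 1 = 1 := by simp [add_mulVec, hL.mulVec_one]
  conv_lhs => rw [← h1]
  rw [mulVec_mulVec, nonsing_inv_mul _ (isUnit_iff_ne_zero.2 hL.det_one_add_ne_zero), one_mulVec]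

theorem sum_one_vecMul_inv_one_add (hL : IsLaplacian L) :
    ∑ j, ((1 : m → ℝ) ᵥ* (1 + L)⁻¹) j = Fintype.card m := by
  rw [← dotProduct_one _, ← dotProduct_mulVec, hL.inv_one_add_mulVec_one, one_dotProduct_one]

end IsLaplacian

section Hub

variable {n : ℕ} {L : Matrix (Fin n) (Fin n) ℝ} {δ : ℝ}

def symmetricHub (L : Matrix (Fin n) (Fin n) ℝ) (δ : ℝ) :
    Matrix (Fin n ⊕ Unit) (Fin n ⊕ Unit) ℝ :=
  hubL0 L + hubH δ (fun _ => δ)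

noncomputable def hubWeight (L : Matrix (Fin n) (Fin n) ℝ) (δ : ℝ) : Fin n ⊕ Unit → ℝ :=
  Sum.elim (1 ᵥ* (1 + δ⁻¹ • L)⁻¹) 1

theorem symmetricHub_eq_fromBlocks (L : Matrix (Fin n) (Fin n) ℝ) (δ : ℝ) :
    symmetricHub L δ =
      fromBlocks (L + δ • 1) (of fun _ _ => -δ) (of fun _ _ => -δ) (of fun _ _ => n * δ) := by
  simp only [symmetricHub, hubL0, hubH, hubHI, hubHv, fromBlocks_smul, fromBlocks_add]
  congr 1 <;> ext <;> simp [mul_comm]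

theorem symmetricHub_offDiag_nonpos (hL : IsLaplacian L) (hδ : 0 ≤ δ) (i j : Fin n ⊕ Unit)
    (hij : i ≠ j) : symmetricHub L δ i j ≤ 0 := by
  rw [symmetricHub_eq_fromBlocks]
  rcases i with i | ⟨⟩ <;> rcases j with j | ⟨⟩
  · have hij' : i ≠ j := fun h => hij (h ▸ rfl)
    simpa [one_apply_ne hij'] using hL.1 i j hij'
  · simpa using hδ
  · simpa using hδ
  · exact absurd rfl hij

theorem symmetricHub_mulVec_one (hL : IsLaplacian L) : symmetricHub L δ *ᵥ 1 = 0 := by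
  rw [symmetricHub_eq_fromBlocks, ← Sum.elim_one_one, fromBlocks_mulVec]
  ext (i | i)
  · simp [mulVec, dotProduct, Matrix.add_apply, sum_add_distrib, one_apply, hL.2 i]
  · simp [mulVec, dotProduct]

theorem symmetricHub_apply_inr_le (x : Fin n ⊕ Unit) (hx : x ≠ Sum.inr ()) :
    symmetricHub L δ x (Sum.inr ()) ≤ -δ := by
  rcases x with i | ⟨⟩
  · simp [symmetricHub_eq_fromBlocks]
  · exact absurd rfl hx

theorem sum_hubWeight (hL : IsLaplacian L) (hδ : 0 < δ) : ∑ x, hubWeight L δ x = n + 1 := by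
  simp [hubWeight, Fintype.sum_sum_type,
    (hL.smul (inv_nonneg.2 hδ.le)).sum_one_vecMul_inv_one_add]

theorem hubWeight_vecMul_symmetricHub (hL : IsLaplacian L) (hδ : 0 < δ) :
    hubWeight L δ ᵥ* symmetricHub L δ = 0 := by
  rw [hubWeight, symmetricHub_eq_fromBlocks, vecMul_fromBlocks]
  have hLδ := hL.smul (inv_nonneg.2 hδ.le)
  set s : Fin n → ℝ := 1 ᵥ* (1 + δ⁻¹ • L)⁻¹
  have hsL : s ᵥ* (L + δ • 1) = δ • 1 := by
    rw [show L + δ • 1 = δ • (1 + δ⁻¹ • L) by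
        rw [smul_add, smul_smul, mul_inv_cancel₀ hδ.ne', one_smul, add_comm],
      vecMul_smul, vecMul_vecMul, nonsing_inv_mul _ (isUnit_iff_ne_zero.2 hLδ.det_one_add_ne_zero),
      vecMul_one]
  have hs : ∑ j, s j = n := by simpa using hLδ.sum_one_vecMul_inv_one_add
  simp only [Sum.elim_comp_inl, Sum.elim_comp_inr, hsL]
  ext (j | j)
  · simp [vecMul, dotProduct]
  · simp [vecMul, dotProduct, ← sum_mul, hs]

end Hub

/-- Consensus in the system with a symmetric hub (`v = δ·1`): the solution
converges to the constant vector `c·1′` with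
`c = (1/(n+1))·(Σⱼ sⱼ^δ y⁰ⱼ + y⁰_{n+1})`, where `sⱼ^δ` is the `j`-th column
sum of `(I + δ⁻¹L)⁻¹`. -/
theorem consensus_symmetric_hub {n : ℕ} (L : Matrix (Fin n) (Fin n) ℝ)
    (hL : IsLaplacian L) (δ : ℝ) (hδ : 0 < δ) (y0 : (Fin n ⊕ Unit) → ℝ) :
    Tendsto
      (fun t : ℝ =>
        (NormedSpace.exp (-(t • (hubL0 L + hubH δ (fun _ => δ))))).mulVec y0)
      atTop
      (𝓝 (fun _ => ((n : ℝ) + 1)⁻¹ *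
        ((∑ j, (∑ i, (1 + δ⁻¹ • L)⁻¹ i j) * y0 (Sum.inl j)) +
          y0 (Sum.inr ())))) := by
  have hw1 : ∑ x, (((n : ℝ) + 1)⁻¹ • hubWeight L δ) x = 1 := by
    simp only [Pi.smul_apply, smul_eq_mul, ← mul_sum, sum_hubWeight hL hδ]
    exact inv_mul_cancel₀ (by positivity)
  have hwM : (((n : ℝ) + 1)⁻¹ • hubWeight L δ) ᵥ* symmetricHub L δ = 0 := by
    rw [smul_vecMul, hubWeight_vecMul_symmetricHub hL hδ, smul_zero]
  have key := tendsto_exp_neg_smul_mulVec (symmetricHub_offDiag_nonpos hL hδ.le)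
    (symmetricHub_mulVec_one hL) hwM hw1 hδ symmetricHub_apply_inr_le y0
  refine key.mono_right (le_of_eq (congrArg _ (funext fun _ => ?_)))
  simp [hubWeight, dotProduct, Fintype.sum_sum_type, vecMul, mul_add, mul_sum, mul_assoc]
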